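/- Policy difference lemma (operator form): Let π, π' be policies with bounded resolvents σ_π = (id−γπP)⁻¹, σ_π' = (id−γπ'P)⁻¹, cost c, c_π = πc, c_π' = π'c, value functions v_π = σ_π c_π, v_π' = σ_π' c_π', q-function q_π = c + γ P v_π, and Δ = π' − π. Then v_π' − v_π = σ_π' Δ q_π = σ_π Δ q_π + γ σ_π (ΔP) σ_π' Δ q_π. -/
import Mathlib


/-- Policy difference lemma in operator form:
`v_π' - v_π = σ_π' Δ q_π = σ_π Δ q_π + γ σ_π (ΔP) σ_π' Δ q_π`. -/
theorem policy_difference_lemma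
    {FS FK : Type*} [NormedAddCommGroup FS] [NormedSpace ℝ FS]
    [NormedAddCommGroup FK] [NormedSpace ℝ FK]
    (P : FS →L[ℝ] FK) (π π' : FK →L[ℝ] FS) (γ : ℝ) (hγ0 : 0 ≤ γ) (hγ1 : γ < 1)
    (σπ σπ' : FS →L[ℝ] FS)
    (hσπ1 : σπ * (1 - γ • (π.comp P)) = 1) (hσπ2 : (1 - γ • (π.comp P)) * σπ = 1)
    (hσπ'1 : σπ' * (1 - γ • (π'.comp P)) = 1) (hσπ'2 : (1 - γ • (π'.comp P)) * σπ' = 1)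
    (c : FK) (vπ vπ' : FS) (hvπ : vπ = σπ (π c)) (hvπ' : vπ' = σπ' (π' c))
    (qπ : FK) (hqπ : qπ = c + γ • (P vπ))
    (Δ : FK →L[ℝ] FS) (hΔ : Δ = π' - π) :
    vπ' - vπ = σπ' (Δ qπ) ∧
    vπ' - vπ = σπ (Δ qπ) + γ • (σπ (Δ (P (σπ' (Δ qπ))))) := by
  -- Bellman equation for π
  have h1 : vπ - γ • (π (P vπ)) = π c := by
    have h := DFunLike.congr_fun hσπ2 (π c)
    simpa [ContinuousLinearMap.mul_apply, ContinuousLinearMap.sub_apply,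
      ContinuousLinearMap.smul_apply, ContinuousLinearMap.comp_apply, ← hvπ] using h
  -- π qπ = vπ
  have hπq : π qπ = vπ := by
    rw [hqπ, map_add, map_smul, ← h1]
    abel
  -- (1 - γπ'P)(vπ' - vπ) = Δ qπ
  have h2 : (1 - γ • (π'.comp P)) (vπ' - vπ) = Δ qπ := by
    have h' : vπ' - γ • (π' (P vπ')) = π' c := by
      have h := DFunLike.congr_fun hσπ'2 (π' c)
      simpa [ContinuousLinearMap.mul_apply, ContinuousLinearMap.sub_apply,
        ContinuousLinearMap.smul_apply, ContinuousLinearMap.comp_apply, ← hvπ'] using h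
    have hπ'q : π' qπ = π' c + γ • (π' (P vπ)) := by
      rw [hqπ, map_add, map_smul]
    simp only [ContinuousLinearMap.sub_apply, ContinuousLinearMap.smul_apply,
      ContinuousLinearMap.comp_apply, ContinuousLinearMap.one_apply, hΔ, map_sub, smul_sub]
    rw [hπ'q, ← h', ← hπq]
    abel
  have key1 : vπ' - vπ = σπ' (Δ qπ) := by
    have h := DFunLike.congr_fun hσπ'1 (vπ' - vπ)
    rw [ContinuousLinearMap.mul_apply, h2, ContinuousLinearMap.one_apply] at h
    exact h.symm
  refine ⟨key1, ?_⟩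
  -- resolvent identity at operator level
  have hkey : (1 - γ • (π.comp P)) = (1 - γ • (π'.comp P)) + γ • (π'.comp P - π.comp P) := by
    rw [smul_sub]; abel
  have hop : σπ' = σπ + σπ * ((γ • (π'.comp P - π.comp P)) * σπ') := by
    calc σπ' = σπ * ((1 - γ • (π.comp P)) * σπ') := by rw [← mul_assoc, hσπ1, one_mul]
      _ = σπ * ((1 - γ • (π'.comp P)) * σπ') + σπ * ((γ • (π'.comp P - π.comp P)) * σπ') := by
          rw [hkey, add_mul, mul_add]
      _ = σπ + σπ * ((γ • (π'.comp P - π.comp P)) * σπ') := by rw [hσπ'2, mul_one]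
  have hres : σπ' (Δ qπ) = σπ (Δ qπ) + γ • σπ (Δ (P (σπ' (Δ qπ)))) := by
    conv_lhs => rw [hop]
    simp [ContinuousLinearMap.mul_apply, ContinuousLinearMap.add_apply,
      ContinuousLinearMap.smul_apply, ContinuousLinearMap.comp_apply,
      ContinuousLinearMap.sub_apply, hΔ, map_sub, smul_sub]
    abel
  rw [key1]
  exact hres
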